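/- On R^6 with coordinates (x1,...,x6), define P with nonzero entries P^{14} = p14, P^{23} = p23, P^{34} = p34 + p14 x2, P^{36} = p36, P^{46} = -p14 x5, P^{56} = p56, and P' with nonzero entries P'^{14} = c44 p14 x4/p34, P'^{23} = b32 x2, P'^{34} = c44 x4 + c44 p14 x2 x4/p34, P'^{46} = -c44 p14 x4 x5/p34, P'^{56} = e65 x5, where all parameters are real constants with p34 ≠ 0. Then P and P' are compatible Poisson structures: [P,P] = [P',P'] = [P,P'] = 0 identically. -/

import Mathlib

open scoped BigOperators

noncomputable def pd {m : ℕ} (μ : Fin m) (f : (Fin m → ℝ) → ℝ) (x : Fin m → ℝ) : ℝ :=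
  fderiv ℝ f x (Pi.single μ 1)

/-- Poisson bracket associated to a bivector field `P`. -/
noncomputable def pbrk {m : ℕ} (P : (Fin m → ℝ) → Fin m → Fin m → ℝ)
    (f g : (Fin m → ℝ) → ℝ) (x : Fin m → ℝ) : ℝ :=
  ∑ μ, ∑ ν, P x μ ν * pd μ f x * pd ν g x

/-- Schouten bracket `[P,P]^{λμν}`. -/
noncomputable def schouten {m : ℕ} (P : (Fin m → ℝ) → Fin m → Fin m → ℝ)
    (l μ ν : Fin m) (x : Fin m → ℝ) : ℝ :=
  ∑ ρ, (P x ρ l * pd ρ (fun y => P y μ ν) x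
      + P x ρ ν * pd ρ (fun y => P y l μ) x
      + P x ρ μ * pd ρ (fun y => P y ν l) x)

/-- Mixed Schouten bracket `[P,Q]^{λμν}`. -/
noncomputable def schoutenMixed {m : ℕ} (P Q : (Fin m → ℝ) → Fin m → Fin m → ℝ)
    (l μ ν : Fin m) (x : Fin m → ℝ) : ℝ :=
  ∑ ρ, (P x ρ l * pd ρ (fun y => Q y μ ν) x + Q x ρ l * pd ρ (fun y => P y μ ν) x
      + P x ρ ν * pd ρ (fun y => Q y l μ) x + Q x ρ ν * pd ρ (fun y => P y l μ) x
      + P x ρ μ * pd ρ (fun y => Q y ν l) x + Q x ρ μ * pd ρ (fun y => P y ν l) x)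

/-- The Poisson bivector `P` on the nilpotent group `A_{6,1}`. -/
noncomputable def P61 (p14 p23 p34 p36 p56 : ℝ) : (Fin 6 → ℝ) → Fin 6 → Fin 6 → ℝ :=
  fun x μ ν =>
    let C := p34 + p14 * x 1
    let D := -(p14 * x 4)
    !![0, 0, 0, p14, 0, 0;
       0, 0, p23, 0, 0, 0;
       0, -p23, 0, C, 0, p36;
       -p14, 0, -C, 0, 0, D;
       0, 0, 0, 0, 0, p56;
       0, 0, -p36, -D, -p56, 0] μ ν

/-- The Poisson bivector `P'` on the nilpotent group `A_{6,1}`. -/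
noncomputable def P61' (p14 p34 b32 c44 e65 : ℝ) : (Fin 6 → ℝ) → Fin 6 → Fin 6 → ℝ :=
  fun x μ ν =>
    let A := c44 * p14 * x 3 / p34
    let B := b32 * x 1
    let C := c44 * x 3 + c44 * p14 * x 1 * x 3 / p34
    let D := -(c44 * p14 * x 3 * x 4 / p34)
    let E := e65 * x 4
    !![0, 0, 0, A, 0, 0;
       0, 0, B, 0, 0, 0;
       0, -B, 0, C, 0, 0;
       -A, 0, -C, 0, 0, D;
       0, 0, 0, 0, 0, E;
       0, 0, 0, -D, -E, 0] μ ν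

/-!
The Schouten bracket of a skew bivector field is a totally antisymmetric 3-tensor, so each of the
three brackets vanishes as soon as its components with `l < μ < ν` do. The coefficients of `P` and
`P'` are polynomials in the coordinates, so these twenty components are computed with the product
rule and vanish as polynomial identities.
-/

section PartialDerivative

variable {m : ℕ} {μ : Fin m} {f g : (Fin m → ℝ) → ℝ} {x : Fin m → ℝ}

lemma pd_const (c : ℝ) : pd μ (fun _ => c) x = 0 := by
  simp [pd]

lemma pd_coord (i : Fin m) : pd μ (fun y => y i) x = if i = μ then 1 else 0 := by
  rw [pd, (hasFDerivAt_apply i x).fderiv]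
  simp [Pi.single_apply]

lemma pd_neg : pd μ (fun y => -f y) x = -pd μ f x := by
  simp [pd, fderiv_fun_neg]

lemma pd_add (hf : DifferentiableAt ℝ f x) (hg : DifferentiableAt ℝ g x) :
    pd μ (fun y => f y + g y) x = pd μ f x + pd μ g x := by
  simp [pd, fderiv_fun_add hf hg]

lemma pd_mul (hf : DifferentiableAt ℝ f x) (hg : DifferentiableAt ℝ g x) :
    pd μ (fun y => f y * g y) x = pd μ f x * g x + f x * pd μ g x := by
  simp [pd, fderiv_fun_mul hf hg]
  ring

lemma pd_div_const (hf : DifferentiableAt ℝ f x) (c : ℝ) :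
    pd μ (fun y => f y / c) x = pd μ f x / c := by
  simp only [div_eq_mul_inv]
  rw [pd_mul hf (differentiableAt_const _), pd_const]
  ring

end PartialDerivative

lemma eq_zero_of_cyclic_of_swap {ι G : Type*} [LinearOrder ι] [AddGroup G] [IsAddTorsionFree G]
    {S : ι → ι → ι → G} (hcyc : ∀ a b c, S a b c = S b c a) (hswap : ∀ a b c, S a c b = -S a b c)
    (hsorted : ∀ a b c, a < b → b < c → S a b c = 0) (a b c : ι) : S a b c = 0 := by
  have hdiag : ∀ a b, S a b b = 0 := fun a b => self_eq_neg.mp (hswap a b b)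
  have hrot : ∀ a b c, S a b c = S c a b := fun a b c => by rw [hcyc, hcyc]
  rcases lt_trichotomy a b with hab | rfl | hba
  · rcases lt_trichotomy b c with hbc | rfl | hcb
    · exact hsorted a b c hab hbc
    · exact hdiag a b
    · rcases lt_trichotomy a c with hac | rfl | hca
      · rw [← neg_eq_zero, ← hswap]
        exact hsorted a c b hac hcb
      · rw [hcyc]
        exact hdiag b a
      · rw [hrot]
        exact hsorted c a b hca hab
  · rw [hrot]
    exact hdiag c a
  · rcases lt_trichotomy a c with hac | rfl | hca
    · rw [← neg_eq_zero, ← hswap, ← hcyc]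
      exact hsorted b a c hba hac
    · rw [hcyc]
      exact hdiag b a
    · rcases lt_trichotomy b c with hbc | rfl | hcb
      · rw [hcyc]
        exact hsorted b c a hbc hca
      · exact hdiag a b
      · rw [hrot, ← neg_eq_zero, ← hswap]
        exact hsorted c b a hcb hba

section Schouten

variable {m : ℕ} {P Q : (Fin m → ℝ) → Fin m → Fin m → ℝ} {x : Fin m → ℝ}

lemma schouten_cyclic (l μ ν : Fin m) : schouten P l μ ν x = schouten P μ ν l x :=
  Finset.sum_congr rfl fun _ _ => by ring

lemma schoutenMixed_cyclic (l μ ν : Fin m) :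
    schoutenMixed P Q l μ ν x = schoutenMixed P Q μ ν l x :=
  Finset.sum_congr rfl fun _ _ => by ring

lemma pd_swap (hP : ∀ y μ ν, P y ν μ = -P y μ ν) (ρ μ ν : Fin m) :
    pd ρ (fun y => P y ν μ) x = -pd ρ (fun y => P y μ ν) x := by
  rw [show (fun y => P y ν μ) = fun y => -P y μ ν from funext fun y => hP y μ ν, pd_neg]

lemma schouten_swap (hP : ∀ y μ ν, P y ν μ = -P y μ ν) (l μ ν : Fin m) :
    schouten P l ν μ x = -schouten P l μ ν x := by
  simp only [schouten, pd_swap hP _ ν μ, pd_swap hP _ l ν, pd_swap hP _ μ l,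
    ← Finset.sum_neg_distrib]
  exact Finset.sum_congr rfl fun _ _ => by ring

lemma schoutenMixed_swap (hP : ∀ y μ ν, P y ν μ = -P y μ ν) (hQ : ∀ y μ ν, Q y ν μ = -Q y μ ν)
    (l μ ν : Fin m) : schoutenMixed P Q l ν μ x = -schoutenMixed P Q l μ ν x := by
  simp only [schoutenMixed, pd_swap hP _ ν μ, pd_swap hP _ l ν, pd_swap hP _ μ l,
    pd_swap hQ _ ν μ, pd_swap hQ _ l ν, pd_swap hQ _ μ l, ← Finset.sum_neg_distrib]
  exact Finset.sum_congr rfl fun _ _ => by ring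

end Schouten

section A61

variable (p14 p23 p34 p36 p56 b32 c44 e65 : ℝ)

lemma P61_swap (y : Fin 6 → ℝ) (μ ν : Fin 6) :
    P61 p14 p23 p34 p36 p56 y ν μ = -P61 p14 p23 p34 p36 p56 y μ ν := by
  fin_cases μ <;> fin_cases ν <;> simp [P61]

lemma P61'_swap (y : Fin 6 → ℝ) (μ ν : Fin 6) :
    P61' p14 p34 b32 c44 e65 y ν μ = -P61' p14 p34 b32 c44 e65 y μ ν := by
  fin_cases μ <;> fin_cases ν <;> simp [P61']

lemma schouten_P61 (x : Fin 6 → ℝ) (l μ ν : Fin 6) :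
    schouten (P61 p14 p23 p34 p36 p56) l μ ν x = 0 := by
  refine eq_zero_of_cyclic_of_swap (S := fun l μ ν => schouten _ l μ ν x) schouten_cyclic
    (schouten_swap (P61_swap _ _ _ _ _)) (fun l μ ν hlμ hμν => ?_) l μ ν
  fin_cases l <;> fin_cases μ <;> fin_cases ν <;>
    simp only [Fin.reduceFinMk, Fin.reduceLT] at hlμ hμν ⊢ <;>
    simp (disch := fun_prop) only [schouten, P61, Fin.sum_univ_six, Matrix.of_apply,
      Matrix.cons_val', Matrix.cons_val, Matrix.cons_val_zero, Matrix.empty_val',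
      Matrix.cons_val_fin_one, pd_add, pd_mul, pd_const, pd_coord, pd_neg,
      Fin.reduceEq, ↓reduceIte] <;>
    ring

lemma schouten_P61' (x : Fin 6 → ℝ) (l μ ν : Fin 6) :
    schouten (P61' p14 p34 b32 c44 e65) l μ ν x = 0 := by
  refine eq_zero_of_cyclic_of_swap (S := fun l μ ν => schouten _ l μ ν x) schouten_cyclic
    (schouten_swap (P61'_swap _ _ _ _ _)) (fun l μ ν hlμ hμν => ?_) l μ ν
  fin_cases l <;> fin_cases μ <;> fin_cases ν <;>
    simp only [Fin.reduceFinMk, Fin.reduceLT] at hlμ hμν ⊢ <;>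
    simp (disch := fun_prop) only [schouten, P61', Fin.sum_univ_six, Matrix.of_apply,
      Matrix.cons_val', Matrix.cons_val, Matrix.cons_val_zero, Matrix.empty_val',
      Matrix.cons_val_fin_one, pd_add, pd_mul, pd_const, pd_coord, pd_neg,
      pd_div_const, Fin.reduceEq, ↓reduceIte] <;>
    ring

lemma schoutenMixed_P61_P61' (h34 : p34 ≠ 0) (x : Fin 6 → ℝ) (l μ ν : Fin 6) :
    schoutenMixed (P61 p14 p23 p34 p36 p56) (P61' p14 p34 b32 c44 e65) l μ ν x = 0 := by
  refine eq_zero_of_cyclic_of_swap (S := fun l μ ν => schoutenMixed _ _ l μ ν x)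
    schoutenMixed_cyclic (schoutenMixed_swap (P61_swap _ _ _ _ _) (P61'_swap _ _ _ _ _))
    (fun l μ ν hlμ hμν => ?_) l μ ν
  fin_cases l <;> fin_cases μ <;> fin_cases ν <;>
    simp only [Fin.reduceFinMk, Fin.reduceLT] at hlμ hμν ⊢ <;>
    simp (disch := fun_prop) only [schoutenMixed, P61, P61', Fin.sum_univ_six,
      Matrix.of_apply, Matrix.cons_val', Matrix.cons_val, Matrix.cons_val_zero, Matrix.empty_val',
      Matrix.cons_val_fin_one, pd_add, pd_mul, pd_const, pd_coord, pd_neg,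
      pd_div_const, Fin.reduceEq, ↓reduceIte] <;>
    field_simp <;> ring

end A61

theorem A61_compatible (p14 p23 p34 p36 p56 b32 c44 e65 : ℝ) (h34 : p34 ≠ 0) :
    (∀ x l μ ν, schouten (P61 p14 p23 p34 p36 p56) l μ ν x = 0) ∧
    (∀ x l μ ν, schouten (P61' p14 p34 b32 c44 e65) l μ ν x = 0) ∧
    (∀ x l μ ν, schoutenMixed (P61 p14 p23 p34 p36 p56)
        (P61' p14 p34 b32 c44 e65) l μ ν x = 0) :=
  ⟨schouten_P61 _ _ _ _ _, schouten_P61' _ _ _ _ _, schoutenMixed_P61_P61' _ _ _ _ _ _ _ _ h34⟩
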